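/- arXiv:1810.05980 — 4 statements merged into one kernel-verified Lean document; each statement's English description precedes it below -/
import Mathlib

section
/- Let p be a prime with p ≡ 3 (mod 4), let x + y√p be the fundamental unit of ℚ(√p), and let h_i be the convergent denominators of √p with period length l. Then p divides y if and only if p divides h_{l/2−1}. -/
/-- State `(m, d)` of the continued fraction algorithm for `√p` at step `i`,
representing the complete quotient `(√p + m) / d`; initial state `(0, 1)`. -/
def cfState (p : ℕ) : ℕ → ℕ × ℕ
  | 0 => (0, 1)
  | i + 1 =>
    let m := (cfState p i).1
    let d := (cfState p i).2
    let a := (Nat.sqrt p + m) / d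
    (a * d - m, (p - (a * d - m) ^ 2) / d)

/-- The `i`-th partial quotient `aᵢ` of the regular continued fraction of `√p`
(so `cfA p 0 = ⌊√p⌋`). -/
def cfA (p i : ℕ) : ℕ := (Nat.sqrt p + (cfState p i).1) / (cfState p i).2

/-- The period length `l` of the regular continued fraction of `√p`. -/
noncomputable def cfPeriod (p : ℕ) : ℕ := sInf {l | 0 < l ∧ cfState p (l + 1) = cfState p 1}

/-- `cfH p (i + 1)` is the denominator `hᵢ` of the `i`-th convergent of `√p`,
with the convention `cfH p 0 = h₋₁ = 0`, `cfH p 1 = h₀ = 1`,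
`hᵢ₊₁ = aᵢ₊₁ hᵢ + hᵢ₋₁`. -/
def cfH (p : ℕ) : ℕ → ℕ
  | 0 => 0
  | 1 => 1
  | i + 2 => cfA p (i + 1) * cfH p (i + 1) + cfH p i

namespace Stmt10

/-- numerators: `cfG p (i+1) = gᵢ`, `cfG p 0 = g₋₁ = 1`. -/
def cfG (p : ℕ) : ℕ → ℕ
  | 0 => 1
  | 1 => Nat.sqrt p
  | i + 2 => cfA p (i + 1) * cfG p (i + 1) + cfG p i

def M (p i : ℕ) : ℕ := (cfState p i).1
def D (p i : ℕ) : ℕ := (cfState p i).2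

variable (p : ℕ)

lemma M_zero : M p 0 = 0 := rfl
lemma D_zero : D p 0 = 1 := rfl
lemma M_succ (i : ℕ) : M p (i+1) = cfA p i * D p i - M p i := rfl
lemma D_succ (i : ℕ) : D p (i+1) = (p - (cfA p i * D p i - M p i)^2) / D p i := rfl
lemma cfA_eq (i : ℕ) : cfA p i = (p.sqrt + M p i) / D p i := rfl

lemma state_eq (i : ℕ) : cfState p i = (M p i, D p i) := rfl

/-- invariant package for the state at index `i+1`. -/
structure Good (i : ℕ) : Prop where
  d_pos : 1 ≤ D p (i+1)
  m_pos : 1 ≤ M p (i+1)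
  m_le : M p (i+1) ≤ p.sqrt
  q_lt : p.sqrt < M p (i+1) + D p (i+1)
  d_le : D p (i+1) ≤ p.sqrt + M p (i+1)
  dd : D p i * D p (i+1) + M p (i+1)^2 = p
  ad : cfA p i * D p i = M p i + M p (i+1)

variable {p}

lemma q_sq_lt (hp : p.Prime) : p.sqrt ^ 2 < p := by
  rcases lt_or_eq_of_le (Nat.sqrt_le' p) with h | h
  · exact h
  · exfalso
    rcases hp.eq_one_or_self_of_dvd p.sqrt ⟨p.sqrt, by rw [← pow_two, h]⟩ with h1 | h1
    · rw [h1] at h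
      norm_num at h
      exact absurd h.symm (Nat.Prime.ne_one hp)
    · rw [h1] at h
      nlinarith [hp.two_le]

lemma lt_q_succ_sq : p < (p.sqrt + 1)^2 := by
  have := Nat.lt_succ_sqrt' p
  simpa [Nat.succ_eq_add_one] using this

lemma q_pos (hp : p.Prime) : 1 ≤ p.sqrt := Nat.sqrt_pos.2 hp.pos

lemma two_q_le (hp : p.Prime) : 2 * p.sqrt ≤ p := by
  have h1 := q_sq_lt hp
  have h2 := q_pos hp
  nlinarith


set_option maxHeartbeats 2000000 in
/-- abstract one-step lemma for the invariants -/
lemma step {P Q m d a m' d' Dp : ℕ} (hp : P.Prime)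
    (hodd : ¬ (2 ∣ P))
    (hq2 : Q^2 < P) (hq2' : P < Q^2 + 2*Q + 1) (hq1 : 1 ≤ Q)
    (d1 : 1 ≤ d) (_m1 : 1 ≤ m) (mq : m ≤ Q) (qlt : Q < m + d) (dle : d ≤ Q + m)
    (dd : Dp * d + m^2 = P)
    (ha : a = (Q + m)/d) (hm'e : m' = a*d - m) (hd'e : d' = (P - m'^2)/d) :
    1 ≤ d' ∧ 1 ≤ m' ∧ m' ≤ Q ∧ Q < m' + d' ∧ d' ≤ Q + m' ∧ d * d' + m'^2 = P
      ∧ a * d = m + m' := by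
  have hdvd : a * d ≤ Q + m := by
    rw [ha]; exact Nat.div_mul_le_self _ _
  have hlt : Q + m < a * d + d := by
    have h1 := Nat.div_add_mod (Q + m) d
    have h2 := Nat.mod_lt (Q + m) (show 0 < d by omega)
    have h3 : a * d = d * ((Q + m) / d) := by rw [ha, Nat.mul_comm]
    omega
  have ha1 : 1 ≤ a := by
    by_contra hc
    push_neg at hc
    have h0 : a = 0 := by omega
    rw [h0, Nat.zero_mul, Nat.zero_add] at hlt
    omega
  have had : d ≤ a * d := by
    have h5 : 1 * d ≤ a * d := Nat.mul_le_mul_right d ha1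
    omega
  have hadm : m ≤ a * d := by
    rcases le_or_gt d (Q + 1) with h | h
    · omega
    · omega
  have hmm' : m + m' = a * d := by omega
  have hm'Q : m' ≤ Q := by omega
  have hm'2q : m' ^ 2 ≤ Q ^ 2 := Nat.pow_le_pow_left hm'Q 2
  have hdvd2 : d ∣ (P - m' ^ 2) := by
    have hcast : ((P - m'^2 : ℕ) : ℤ) = (P : ℤ) - (m' : ℤ)^2 := by
      push_cast [show m'^2 ≤ P by omega]; ring
    have h1 : (P : ℤ) - (m' : ℤ)^2 = d * ((Dp : ℤ) + a * ((m:ℤ) - m')) := by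
      have hddZ : (Dp : ℤ) * d + (m:ℤ)^2 = P := by exact_mod_cast dd
      have hmm : ((m : ℤ) + m') = (a : ℤ) * d := by exact_mod_cast hmm'
      linear_combination (-1 : ℤ) * hddZ + ((m:ℤ) - (m':ℤ)) * hmm
    exact Int.ofNat_dvd.1 (by rw [hcast, h1]; exact ⟨_, rfl⟩)
  have hdd'' : d * d' + m'^2 = P := by
    rw [hd'e, Nat.mul_div_cancel' hdvd2]
    omega
  have hd'1 : 1 ≤ d' := by
    rcases Nat.eq_zero_or_pos d' with h | h
    · exfalso; rw [h, Nat.mul_zero] at hdd''; omega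
    · exact h
  have hm'1 : 1 ≤ m' := by
    rcases Nat.eq_zero_or_pos m' with h | h
    · exfalso
      rw [h] at hdd''
      simp only [pow_two, Nat.mul_zero, Nat.zero_mul, Nat.add_zero] at hdd''
      have hdp : d ∣ P := Dvd.intro d' hdd''
      rcases hp.eq_one_or_self_of_dvd d hdp with h1 | h1
      · rw [h1, Nat.mul_one] at hmm' hdvd hlt
        omega
      · have h2q : 2 * Q ≤ P := by nlinarith
        have : P = 2 * Q := by omega
        exact hodd ⟨Q, this⟩
    · exact h
  have hq_lt' : Q < m' + d' := by
    rcases Nat.lt_or_ge m' Q with h | h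
    · have hdle' : d ≤ Q + m' := by omega
      by_contra hcon
      push_neg at hcon
      have hZ : (d:ℤ) * d' ≤ ((Q:ℤ) + m') * ((Q:ℤ) - m') := by
        have e1 : (d:ℤ) ≤ (Q:ℤ) + m' := by exact_mod_cast hdle'
        have e2 : (d':ℤ) ≤ (Q:ℤ) - m' := by
          have : d' + m' ≤ Q := by omega
          push_cast at this ⊢
          omega
        have e3 : (0:ℤ) ≤ d' := by positivity
        have e4 : (0:ℤ) ≤ (Q:ℤ) + m' := by positivity
        calc (d:ℤ) * d' ≤ ((Q:ℤ) + m') * d' := mul_le_mul_of_nonneg_right e1 e3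
          _ ≤ ((Q:ℤ) + m') * ((Q:ℤ) - m') := mul_le_mul_of_nonneg_left e2 e4
      have hZ2 : (d:ℤ) * d' + m'^2 = P := by exact_mod_cast hdd''
      have hZ3 : ((Q:ℤ))^2 < P := by exact_mod_cast hq2
      nlinarith
    · omega
  have hd'le : d' ≤ Q + m' := by
    by_contra hcon
    push_neg at hcon
    have h1 : Q + 1 ≤ m' + d := by omega
    have e1 : ((Q:ℤ) - m' + 1) ≤ d := by push_cast at h1 ⊢; omega
    have e2 : ((Q:ℤ) + m' + 1) ≤ d' := by exact_mod_cast hcon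
    have e0' : (0:ℤ) < (Q:ℤ) + m' + 1 := by positivity
    have hdZ : (0:ℤ) < (d:ℤ) := by exact_mod_cast (show 0 < d by omega)
    have hZ : ((Q:ℤ) - m' + 1) * ((Q:ℤ) + m' + 1) ≤ (d:ℤ) * d' := by
      calc ((Q:ℤ) - m' + 1) * ((Q:ℤ) + m' + 1)
          ≤ (d:ℤ) * ((Q:ℤ) + m' + 1) := mul_le_mul_of_nonneg_right e1 (le_of_lt e0')
        _ ≤ (d:ℤ) * d' := by
            refine mul_le_mul_of_nonneg_left e2 ?_
            omega
    have hZ2 : (d:ℤ) * d' + m'^2 = P := by exact_mod_cast hdd''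
    have hZ3 : (P:ℤ) < (Q:ℤ)^2 + 2*(Q:ℤ) + 1 := by exact_mod_cast hq2'
    nlinarith
  exact ⟨hd'1, hm'1, hm'Q, hq_lt', hd'le, hdd'', by omega⟩

lemma good (hp : p.Prime) (h2 : p ≠ 2) : ∀ i, Good p i := by
  have hq2 := q_sq_lt hp
  have hq2' : p < p.sqrt^2 + 2*p.sqrt + 1 := by
    have := lt_q_succ_sq (p := p)
    nlinarith [this]
  have hq1 := q_pos hp
  have hodd : ¬ (2 ∣ p) := by
    intro hd
    rcases (Nat.prime_dvd_prime_iff_eq Nat.prime_two hp).1 hd with h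
    exact h2 h.symm
  intro i
  induction i with
  | zero =>
      have hM1 : M p 1 = p.sqrt := by
        rw [M_succ, cfA_eq, M_zero, D_zero]; simp
      have hD1 : D p 1 = p - p.sqrt^2 := by
        rw [D_succ, cfA_eq, M_zero, D_zero]; simp
      have hA0 : cfA p 0 = p.sqrt := by
        rw [cfA_eq, M_zero, D_zero]; simp
      constructor
      · show 1 ≤ D p 1; rw [hD1]; omega
      · show 1 ≤ M p 1; rw [hM1]; omega
      · show M p 1 ≤ p.sqrt; rw [hM1]
      · show p.sqrt < M p 1 + D p 1; rw [hM1, hD1]; omega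
      · show D p 1 ≤ p.sqrt + M p 1; rw [hM1, hD1]; omega
      · show D p 0 * D p 1 + M p 1 ^ 2 = p; rw [hM1, hD1, D_zero]; omega
      · show cfA p 0 * D p 0 = M p 0 + M p 1; rw [hA0, M_zero, hM1, D_zero]; omega
  | succ i ih =>
      obtain ⟨d1, m1, mq, qlt, dle, dd, _ad⟩ := ih
      obtain ⟨h1, h2', h3, h4, h5, h6, h7⟩ :=
        step (Q := p.sqrt) (m := M p (i+1)) (d := D p (i+1)) (a := cfA p (i+1))
          (m' := M p (i+2)) (d' := D p (i+2)) (Dp := D p i)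
          hp hodd hq2 hq2' hq1 d1 m1 mq qlt dle dd
          (cfA_eq p (i+1)) (M_succ p (i+1)) rfl
      exact ⟨h1, h2', h3, h4, h5, h6, h7⟩

section
variable {p : ℕ}

/-- one forward step of the state recursion -/
def stepF (p : ℕ) (s : ℕ × ℕ) : ℕ × ℕ :=
  ((Nat.sqrt p + s.1) / s.2 * s.2 - s.1,
    (p - ((Nat.sqrt p + s.1) / s.2 * s.2 - s.1) ^ 2) / s.2)

lemma state_succ_eq (i : ℕ) : cfState p (i+1) = stepF p (cfState p i) := rfl

lemma fwd {i j : ℕ} (h : cfState p i = cfState p j) :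
    cfState p (i+1) = cfState p (j+1) := by
  rw [state_succ_eq, state_succ_eq, h]

lemma M_eq_of_state_eq {i j : ℕ} (h : cfState p i = cfState p j) : M p i = M p j := by
  unfold M; rw [h]

lemma D_eq_of_state_eq {i j : ℕ} (h : cfState p i = cfState p j) : D p i = D p j := by
  unfold D; rw [h]

lemma state_ext {i j : ℕ} (h1 : M p i = M p j) (h2 : D p i = D p j) :
    cfState p i = cfState p j := by
  rw [state_eq p i, state_eq p j, h1, h2]

variable (hp : p.Prime) (h2 : p ≠ 2)
include hp h2

/-- the "mirror" formula for the partial quotients -/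
lemma cfA_mirror (i : ℕ) : cfA p (i+1) = (p.sqrt + M p (i+2)) / D p (i+1) := by
  obtain ⟨d1, m1, mq, qlt, dle, dd, ad⟩ := good hp h2 i
  obtain ⟨_, _, _, _, _, _, ad'⟩ := good hp h2 (i+1)
  have eM : M p (i+1+1) = M p (i+2) := rfl
  rw [eM] at ad'
  symm
  apply Nat.div_eq_of_lt_le
  · calc cfA p (i+1) * D p (i+1) = M p (i+1) + M p (i+2) := ad'
      _ ≤ p.sqrt + M p (i+2) := by omega
  · calc p.sqrt + M p (i+2) < (M p (i+1) + D p (i+1)) + M p (i+2) := by omega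
      _ = (cfA p (i+1) * D p (i+1)) + D p (i+1) := by omega
      _ = (cfA p (i+1) + 1) * D p (i+1) := by ring

lemma back {i j : ℕ} (hi : 1 ≤ i) (hj : 1 ≤ j)
    (h : cfState p (i+1) = cfState p (j+1)) : cfState p i = cfState p j := by
  obtain ⟨i, rfl⟩ := Nat.exists_eq_add_of_le hi
  obtain ⟨j, rfl⟩ := Nat.exists_eq_add_of_le hj
  rw [Nat.add_comm 1 i] at h ⊢
  rw [Nat.add_comm 1 j] at h ⊢
  have hM := M_eq_of_state_eq h
  have hD := D_eq_of_state_eq h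
  obtain ⟨d1i, _, _, _, _, ddi, adi⟩ := good hp h2 i
  obtain ⟨d1j, _, _, _, _, ddj, adj⟩ := good hp h2 j
  obtain ⟨d1i', _, _, _, _, ddi', adi'⟩ := good hp h2 (i+1)
  obtain ⟨d1j', _, _, _, _, ddj', adj'⟩ := good hp h2 (j+1)
  -- previous d agree
  have hM2 : M p (i+1+1)^2 = M p (j+1+1)^2 := by rw [hM]
  have e1 : D p (i+1) * D p (i+1+1) = D p (j+1) * D p (j+1+1) := by omega
  rw [← hD] at e1
  have hDij : D p (i+1) = D p (j+1) :=
    Nat.eq_of_mul_eq_mul_right (by omega) e1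
  have eMi : M p (i+1+1) = M p (i+2) := rfl
  have eMj : M p (j+1+1) = M p (j+2) := rfl
  have hA : cfA p (i+1) = cfA p (j+1) := by
    rw [cfA_mirror hp h2 i, cfA_mirror hp h2 j, ← eMi, ← eMj, hM, hDij]
  have hMij : M p (i+1) = M p (j+1) := by
    rw [hA, hDij] at adi'
    omega
  exact state_ext hMij hDij

lemma back_iter (m : ℕ) : ∀ {i j : ℕ}, 1 ≤ i → 1 ≤ j →
    cfState p (i+m) = cfState p (j+m) → cfState p i = cfState p j := by
  induction m with
  | zero => intro i j _ _ h; simpa using h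
  | succ m ih =>
      intro i j hi hj h
      have h' : cfState p ((i+m)+1) = cfState p ((j+m)+1) := by
        rw [show (i+m)+1 = i+(m+1) by ring, show (j+m)+1 = j+(m+1) by ring]
        exact h
      exact ih hi hj (back hp h2 (by omega) (by omega) h')

lemma period_set_nonempty : ∃ c, 0 < c ∧ cfState p (c + 1) = cfState p 1 := by
  classical
  obtain ⟨d1, m1, mq, qlt, dle, dd, ad⟩ := good hp h2 0
  -- pigeonhole
  have hmb : ∀ i, M p (i+1) < p.sqrt + 1 := by
    intro i; have := (good hp h2 i).m_le; omega
  have hdb : ∀ i, D p (i+1) < 2 * p.sqrt + 1 := by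
    intro i
    have h1 := (good hp h2 i).d_le
    have h3 := (good hp h2 i).m_le
    omega
  set g : ℕ → Fin (p.sqrt + 1) × Fin (2 * p.sqrt + 1) :=
    fun i => (⟨M p (i+1), hmb i⟩, ⟨D p (i+1), hdb i⟩) with hg
  obtain ⟨i, j, hne, hij⟩ := Finite.exists_ne_map_eq_of_infinite g
  have hstate : cfState p (i+1) = cfState p (j+1) := by
    apply state_ext
    · have := congrArg (fun x => (x.1 : ℕ)) hij; simpa [hg] using this
    · have := congrArg (fun x => (x.2 : ℕ)) hij; simpa [hg] using this
  rcases Nat.lt_or_ge i j with hlt | hge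
  · refine ⟨j - i, by omega, ?_⟩
    have := back_iter hp h2 i (i := 1) (j := (j-i)+1) (by omega) (by omega) ?_
    · exact this.symm
    · rw [show 1 + i = i + 1 by ring, show (j-i)+1+i = j+1 by omega]
      exact hstate
  · have hlt : j < i := by omega
    refine ⟨i - j, by omega, ?_⟩
    have := back_iter hp h2 j (i := 1) (j := (i-j)+1) (by omega) (by omega) ?_
    · exact this.symm
    · rw [show 1 + j = j + 1 by ring, show (i-j)+1+j = i+1 by omega]
      exact hstate.symm

lemma period_pos : 0 < cfPeriod p := by
  have h := Nat.sInf_mem (s := {l | 0 < l ∧ cfState p (l + 1) = cfState p 1})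
    (by obtain ⟨c, hc1, hc2⟩ := period_set_nonempty hp h2; exact ⟨c, hc1, hc2⟩)
  exact h.1

lemma period_spec : cfState p (cfPeriod p + 1) = cfState p 1 := by
  have h := Nat.sInf_mem (s := {l | 0 < l ∧ cfState p (l + 1) = cfState p 1})
    (by obtain ⟨c, hc1, hc2⟩ := period_set_nonempty hp h2; exact ⟨c, hc1, hc2⟩)
  exact h.2

lemma period_min {c : ℕ} (hc : 0 < c) (hs : cfState p (c+1) = cfState p 1) :
    cfPeriod p ≤ c :=
  Nat.sInf_le ⟨hc, hs⟩

lemma periodic : ∀ i, 1 ≤ i → cfState p (i + cfPeriod p) = cfState p i := by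
  intro i hi
  obtain ⟨i, rfl⟩ := Nat.exists_eq_add_of_le hi
  induction i with
  | zero => simpa [Nat.add_comm] using period_spec hp h2
  | succ i ih =>
      have : cfState p ((1+i) + cfPeriod p) = cfState p (1+i) := ih (by omega)
      have h2' := fwd this
      rw [show (1+i) + cfPeriod p + 1 = (1+(i+1)) + cfPeriod p by ring,
        show (1+i)+1 = 1+(i+1) by ring] at h2'
      exact h2'

lemma D_period_one : D p (cfPeriod p) = 1 := by
  have hspec := period_spec hp h2
  have hD := D_eq_of_state_eq hspec
  have hM := M_eq_of_state_eq hspec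
  have hl := period_pos hp h2
  obtain ⟨l, hl⟩ : ∃ l, cfPeriod p = l + 1 := ⟨cfPeriod p - 1, by omega⟩
  rw [hl] at hD hM ⊢
  obtain ⟨d1l, _, _, _, _, ddl, _⟩ := good hp h2 (l+1)
  obtain ⟨d10, _, _, _, _, dd0, _⟩ := good hp h2 0
  rw [D_zero, Nat.one_mul] at dd0
  rw [hD, hM] at ddl
  have e1 : D p (0+1) = D p 1 := rfl
  have e2 : M p (0+1) ^ 2 = M p 1 ^ 2 := rfl
  have : D p (l+1) * D p 1 = 1 * D p 1 := by omega
  exact Nat.eq_of_mul_eq_mul_right (by omega) this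

lemma M_of_D_one {i : ℕ} (hi : 1 ≤ i) (hD : D p i = 1) : M p i = p.sqrt := by
  obtain ⟨i, rfl⟩ := Nat.exists_eq_add_of_le hi
  rw [Nat.add_comm] at hD ⊢
  obtain ⟨_, _, mq, qlt, _, _, _⟩ := good hp h2 i
  omega

lemma state_one_eq : cfState p 1 = (p.sqrt, p - p.sqrt^2) := by
  have hM1 : M p 1 = p.sqrt := by
    rw [M_succ, cfA_eq, M_zero, D_zero]; simp
  have hD1 : D p 1 = p - p.sqrt^2 := by
    rw [D_succ, cfA_eq, M_zero, D_zero]; simp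
  rw [state_eq p 1, hM1, hD1]

lemma D_one_imp {i : ℕ} (hi : 1 ≤ i) (hD : D p i = 1) :
    cfState p (i+1) = cfState p 1 := by
  have hM := M_of_D_one hp h2 hi hD
  have hstate : cfState p i = (p.sqrt, 1) := by
    rw [state_eq p i, hM, hD]
  rw [state_succ_eq, hstate]
  rw [state_one_eq hp h2]
  show ((p.sqrt + p.sqrt) / 1 * 1 - p.sqrt,
    (p - ((p.sqrt + p.sqrt) / 1 * 1 - p.sqrt) ^ 2) / 1) = _
  have hq1 := q_pos hp
  simp only [Nat.div_one, Nat.mul_one]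
  rw [show p.sqrt + p.sqrt - p.sqrt = p.sqrt by omega]

lemma period_dvd {i : ℕ} (hs : cfState p (i+1) = cfState p 1) : cfPeriod p ∣ i := by
  induction i using Nat.strong_induction_on with
  | _ i ih =>
      rcases Nat.eq_zero_or_pos i with h0 | h0
      · simp [h0]
      · have hle : cfPeriod p ≤ i := period_min hp h2 h0 hs
        have hl := period_pos hp h2
        rcases Nat.lt_or_ge (i - cfPeriod p) 1 with hsmall | hbig
        · have : i = cfPeriod p := by omega
          simp [this]
        · have hper : cfState p ((i - cfPeriod p + 1) + cfPeriod p)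
              = cfState p (i - cfPeriod p + 1) := periodic hp h2 _ (by omega)
          rw [show (i - cfPeriod p + 1) + cfPeriod p = i + 1 by omega] at hper
          have : cfState p ((i - cfPeriod p) + 1) = cfState p 1 := by
            rw [← hper]; exact hs
          have hdvd := ih (i - cfPeriod p) (by omega) this
          obtain ⟨c, hc⟩ := hdvd
          exact ⟨c + 1, by rw [Nat.mul_add, ← hc]; omega⟩
end
section
variable {p : ℕ}

lemma H_zero : cfH p 0 = 0 := rfl
lemma H_one : cfH p 1 = 1 := rfl
lemma H_succ (i : ℕ) : cfH p (i+2) = cfA p (i+1) * cfH p (i+1) + cfH p i := rfl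
lemma G_zero : cfG p 0 = 1 := rfl
lemma G_one : cfG p 1 = p.sqrt := rfl
lemma G_succ (i : ℕ) : cfG p (i+2) = cfA p (i+1) * cfG p (i+1) + cfG p i := rfl

lemma D_pos' (hp : p.Prime) (h2 : p ≠ 2) : ∀ i, 1 ≤ D p i := by
  intro i
  cases i with
  | zero => exact le_of_eq (D_zero p).symm
  | succ i => exact (good hp h2 i).d_pos

/-- Wronskian identity -/
lemma wronskian : ∀ i : ℕ,
    (cfG p (i+1) : ℤ) * cfH p i - cfG p i * cfH p (i+1) = (-1)^(i+1) := by
  intro i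
  induction i with
  | zero => simp [G_zero, G_one, H_zero, H_one]
  | succ i ih =>
      rw [H_succ, G_succ]
      push_cast
      have : ((-1:ℤ))^(i+1+1) = -((-1)^(i+1)) := by ring
      rw [this, ← ih]
      ring

variable (hp : p.Prime) (h2 : p ≠ 2)
include hp h2

/-- the two linear relations between numerators and denominators -/
lemma R12 : ∀ i : ℕ,
    ((cfG p (i+1) : ℤ) = M p (i+1) * cfH p (i+1) + D p (i+1) * cfH p i)
    ∧ ((p : ℤ) * cfH p (i+1) = M p (i+1) * cfG p (i+1) + D p (i+1) * cfG p i) := by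
  intro i
  induction i with
  | zero =>
      have hM1 : M p 1 = p.sqrt := by rw [M_succ, cfA_eq, M_zero, D_zero]; simp
      have dd0 : D p 0 * D p 1 + M p 1 ^ 2 = p := (good hp h2 0).dd
      rw [D_zero, Nat.one_mul] at dd0
      constructor
      · rw [G_one, H_one, H_zero, hM1]; push_cast; ring
      · rw [G_one, G_zero, H_one, hM1]
        rw [hM1] at dd0
        have : (p.sqrt : ℤ)^2 + D p 1 = p := by exact_mod_cast (by omega : p.sqrt^2 + D p 1 = p)
        push_cast
        linear_combination -this
  | succ i ih =>
      obtain ⟨R1, R2⟩ := ih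
      have adZ : (cfA p (i+1) : ℤ) * D p (i+1) = M p (i+1) + M p (i+2) := by
        exact_mod_cast ((good hp h2 (i+1)).ad :
          cfA p (i+1) * D p (i+1) = M p (i+1) + M p (i+2))
      have ddZ : (D p (i+1) : ℤ) * D p (i+2) + (M p (i+2):ℤ)^2 = p := by
        exact_mod_cast ((good hp h2 (i+1)).dd :
          D p (i+1) * D p (i+2) + M p (i+2)^2 = p)
      have hD0 : (D p (i+1) : ℤ) ≠ 0 := by
        have := (good hp h2 i).d_pos
        positivity
      have aux : (D p (i+1) : ℤ) * cfH p (i+2) = cfG p (i+1) + M p (i+2) * cfH p (i+1) := by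
        rw [H_succ]
        push_cast
        linear_combination (cfH p (i+1) : ℤ) * adZ - R1
      have e2 : (D p (i+1) : ℤ) * cfG p (i+2) = M p (i+2) * cfG p (i+1) + p * cfH p (i+1) := by
        rw [G_succ]
        push_cast
        linear_combination (cfG p (i+1) : ℤ) * adZ - R2
      constructor
      · apply mul_left_cancel₀ hD0
        linear_combination e2 - (M p (i+2):ℤ) * aux - (cfH p (i+1):ℤ) * ddZ
      · apply mul_left_cancel₀ hD0
        linear_combination (p:ℤ) * aux - (M p (i+2):ℤ) * e2 - (cfG p (i+1):ℤ) * ddZ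

/-- the norm identity -/
lemma normEq (i : ℕ) :
    (cfG p (i+1) : ℤ)^2 - p * (cfH p (i+1) : ℤ)^2 = (-1)^(i+1) * D p (i+1) := by
  obtain ⟨R1, R2⟩ := R12 hp h2 i
  have W := wronskian (p := p) i
  linear_combination (cfG p (i+1) : ℤ) * R1 - (cfH p (i+1) : ℤ) * R2 + (D p (i+1) : ℤ) * W

/-- the period length is even when `p % 4 = 3` -/
lemma period_even (h3 : p % 4 = 3) : cfPeriod p % 2 = 0 := by
  by_contra hodd
  have hl := period_pos hp h2
  obtain ⟨L, hL⟩ : ∃ L, cfPeriod p = L + 1 := ⟨cfPeriod p - 1, by omega⟩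
  have hnorm := normEq hp h2 L
  rw [← hL] at hnorm
  rw [D_period_one hp h2] at hnorm
  have hLodd : (-1 : ℤ)^(cfPeriod p) = -1 :=
    Odd.neg_one_pow (Nat.odd_iff.2 (by omega))
  rw [hLodd] at hnorm
  push_cast at hnorm
  haveI : Fact p.Prime := ⟨hp⟩
  have hcast : ((cfG p (cfPeriod p) : ZMod p))^2 = -1 := by
    have := congrArg (fun z : ℤ => (z : ZMod p)) hnorm
    push_cast at this
    simpa [ZMod.natCast_self] using this
  have hsq : IsSquare (-1 : ZMod p) := ⟨(cfG p (cfPeriod p) : ZMod p), by rw [← hcast]; ring⟩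
  exact absurd (ZMod.exists_sq_eq_neg_one_iff.mp hsq) (by simp [h3])

end
section
variable {p : ℕ} (hp : p.Prime) (h2 : p ≠ 2)
include hp h2

lemma M_one' : M p 1 = p.sqrt := by rw [M_succ, cfA_eq, M_zero, D_zero]; simp

/-- palindromic symmetry of the state sequence -/
lemma sym : ∀ i j, i + j = cfPeriod p → D p i = D p j ∧ (1 ≤ j → M p (i+1) = M p j) := by
  intro i
  induction i with
  | zero =>
      intro j hj
      have hl := period_pos hp h2
      simp only [Nat.zero_add] at hj
      subst hj
      have hDl := D_period_one hp h2
      have hMl := M_of_D_one hp h2 (by omega) hDl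
      refine ⟨by rw [D_zero, hDl], fun _ => ?_⟩
      have e1 : M p (0+1) = M p 1 := rfl
      rw [e1, M_one' hp h2, hMl]
  | succ i ih =>
      intro j hj
      have hl := period_pos hp h2
      cases j with
      | zero =>
          have hil : i + 1 = cfPeriod p := by omega
          refine ⟨?_, fun hj1 => absurd hj1 (by omega)⟩
          rw [hil, D_period_one hp h2, D_zero]
      | succ j =>
          obtain ⟨hD, hM⟩ := ih (j+2) (by omega)
          have hM' := hM (by omega)
          have dd_i : D p i * D p (i+1) + M p (i+1)^2 = p := (good hp h2 i).dd
          have dd_j1 : D p (j+1) * D p (j+2) + M p (j+2)^2 = p := (good hp h2 (j+1)).dd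
          have hDpos := D_pos' hp h2
          have hM2 : M p (i+1)^2 = M p (j+2)^2 := by rw [hM']
          have e1 : D p i * D p (i+1) = D p (j+1) * D p (j+2) := by omega
          rw [hD] at e1
          have hDnew : D p (i+1) = D p (j+1) := by
            have e2 : D p (i+1) * D p (j+2) = D p (j+1) * D p (j+2) := by
              calc D p (i+1) * D p (j+2) = D p (j+2) * D p (i+1) := by ring
                _ = D p (j+1) * D p (j+2) := e1
            exact Nat.eq_of_mul_eq_mul_right (by have := hDpos (j+2); omega) e2
          refine ⟨hDnew, fun _ => ?_⟩
          have ad_i1 : cfA p (i+1) * D p (i+1) = M p (i+1) + M p (i+2) :=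
            (good hp h2 (i+1)).ad
          have ad_j1 : cfA p (j+1) * D p (j+1) = M p (j+1) + M p (j+2) :=
            (good hp h2 (j+1)).ad
          have hAeq : cfA p (i+1) = cfA p (j+1) := by
            rw [cfA_eq p (i+1), cfA_mirror hp h2 j, hM', hDnew]
          rw [← hAeq, ← hDnew] at ad_j1
          have e3 : M p (i+1+1) = M p (i+2) := rfl
          rw [e3]
          omega

/-- palindrome of partial quotients -/
lemma a_pal {i j : ℕ} (hi : 1 ≤ i) (hj : 1 ≤ j) (hij : i + j = cfPeriod p) :
    cfA p i = cfA p j := by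
  obtain ⟨i, rfl⟩ := Nat.exists_eq_add_of_le hi
  rw [Nat.add_comm 1 i] at hij ⊢
  obtain ⟨j, rfl⟩ := Nat.exists_eq_add_of_le hj
  rw [Nat.add_comm 1 j] at hij ⊢
  obtain ⟨hD, hM⟩ := sym hp h2 (i+1) (j+1) hij
  obtain ⟨hD', hM'⟩ := sym hp h2 i (j+2) (by omega)
  have hM'' := hM' (by omega)
  rw [cfA_eq p (i+1), cfA_mirror hp h2 j, hM'', hD]

/-- the middle of the period: `d_{l/2} = 2` -/
lemma D_mid_two (h3 : p % 4 = 3) : D p (cfPeriod p / 2) = 2 ∧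
    cfA p (cfPeriod p / 2) = M p (cfPeriod p / 2) := by
  have hl := period_pos hp h2
  have heven := period_even hp h2 h3
  set k := cfPeriod p / 2 with hk
  clear_value k
  have hkk : k + k = cfPeriod p := by omega
  have hk1 : 1 ≤ k := by omega
  obtain ⟨_, hM⟩ := sym hp h2 k k hkk
  have hMmid : M p (k+1) = M p k := hM hk1
  have ad_k : cfA p k * D p k = M p k + M p (k+1) := (good hp h2 k).ad
  have dd_k : D p (k-1) * D p k + M p k ^ 2 = p := by
    obtain ⟨k', rfl⟩ : ∃ k', k = k' + 1 := ⟨k - 1, by omega⟩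
    have := (good hp h2 k').dd
    simpa using this
  have h2m : cfA p k * D p k = 2 * M p k := by omega
  have hdvd2p : D p k ∣ 2 * p := by
    have h1 : D p k ∣ 2 * M p k := ⟨cfA p k, by rw [← h2m]; ring⟩
    have h4 : 2 * p = D p k * (2 * D p (k-1)) + M p k * (2 * M p k) := by
      have e1 : M p k * (2 * M p k) = 2 * M p k ^ 2 := by ring
      have e2 : D p k * (2 * D p (k-1)) = 2 * (D p (k-1) * D p k) := by ring
      rw [e1, e2]
      omega
    rw [h4]
    exact dvd_add (Dvd.intro _ rfl) (Dvd.dvd.mul_left h1 _)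
  have hdlt : D p k < p := by
    obtain ⟨k', rfl⟩ : ∃ k', k = k' + 1 := ⟨k - 1, by omega⟩
    have h5 := (good hp h2 k').d_le
    have h6 := (good hp h2 k').m_le
    have h7 := two_q_le hp
    have h8 : ¬ (2 ∣ p) := by
      intro hd
      rcases (Nat.prime_dvd_prime_iff_eq Nat.prime_two hp).1 hd with h
      exact h2 h.symm
    rcases Nat.lt_or_ge (D p (k'+1)) p with h | h
    · exact h
    · exfalso
      have : p = 2 * p.sqrt := by omega
      exact h8 ⟨p.sqrt, this⟩
  have hcop : (D p k).Coprime p := by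
    rcases Nat.coprime_or_dvd_of_prime hp (D p k) with h | h
    · exact h.symm
    · exfalso; have := Nat.le_of_dvd (by have := D_pos' hp h2 k; omega) h; omega
  have hd2 : D p k ∣ 2 := hcop.dvd_of_dvd_mul_right hdvd2p
  have hdne1 : D p k ≠ 1 := by
    intro hone
    have hst := D_one_imp hp h2 hk1 hone
    have hdv := period_dvd hp h2 hst
    have := Nat.le_of_dvd (by omega) hdv
    omega
  have hD2 : D p k = 2 := by
    have ha := Nat.le_of_dvd (by omega) hd2
    have hb := D_pos' hp h2 k
    omega
  refine ⟨hD2, ?_⟩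
  rw [hD2] at h2m
  omega

/-- the product identity from the palindrome -/
lemma prodId : ∀ i j, i + j + 1 = cfPeriod p →
    cfH p (i+1) * cfH p (j+1) + cfH p i * cfH p j = cfH p (cfPeriod p) := by
  intro i
  induction i with
  | zero =>
      intro j hj
      have e1 : cfH p (0+1) = 1 := rfl
      have e0 : cfH p 0 = 0 := rfl
      rw [e1, e0, show j + 1 = cfPeriod p by omega]
      ring
  | succ i ih =>
      intro j hj
      cases j with
      | zero =>
          have e1 : cfH p (0+1) = 1 := rfl
          have e0 : cfH p 0 = 0 := rfl
          rw [e1, e0, Nat.mul_one, Nat.mul_zero, Nat.add_zero,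
            show i + 1 + 1 = cfPeriod p by omega]
      | succ j =>
          have hIH := ih (j+2) (by omega)
          have hApal : cfA p (i+1) = cfA p (j+2) :=
            a_pal hp h2 (by omega) (by omega) (by omega)
          have hs : cfH p (j+3) = cfA p (j+2) * cfH p (j+2) + cfH p (j+1) := H_succ (j+1)
          have hs2 : cfH p (i+1+1) = cfA p (i+1) * cfH p (i+1) + cfH p i := H_succ i
          calc cfH p (i+1+1) * cfH p (j+1+1) + cfH p (i+1) * cfH p (j+1)
              = (cfA p (i+1) * cfH p (i+1) + cfH p i) * cfH p (j+2)
                + cfH p (i+1) * cfH p (j+1) := by rw [hs2]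
            _ = cfH p (i+1) * (cfA p (j+2) * cfH p (j+2) + cfH p (j+1))
                + cfH p i * cfH p (j+2) := by rw [hApal]; ring
            _ = cfH p (i+1) * cfH p (j+3) + cfH p i * cfH p (j+2) := by rw [← hs]
            _ = cfH p (cfPeriod p) := hIH
end
section
variable {p : ℕ}

/-- error term of the `n`-th convergent (shifted index) -/
noncomputable def Ee (p n : ℕ) : ℝ := Real.sqrt p * cfH p n - cfG p n

/-- positive error `|E (n+1)|` -/
noncomputable def Ff (p n : ℕ) : ℝ := (-1)^n * Ee p (n+1)

/-- denominator quantity -/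
noncomputable def Tt (p n : ℕ) : ℝ :=
  (Real.sqrt p + M p (n+1)) * cfH p (n+1) + D p (n+1) * cfH p n

variable (hp : p.Prime) (h2 : p ≠ 2)
include hp

lemma omega_sq : Real.sqrt p ^ 2 = p := Real.sq_sqrt (by positivity)

lemma omega_gt_one : 1 < Real.sqrt p := by
  have : (1:ℝ) < p := by exact_mod_cast hp.one_lt
  nlinarith [omega_sq hp, Real.sqrt_nonneg (p:ℝ)]

lemma q_lt_omega : (p.sqrt : ℝ) < Real.sqrt p := by
  have h := q_sq_lt hp
  have h' : ((p.sqrt : ℝ))^2 < p := by exact_mod_cast h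
  nlinarith [omega_sq hp, Real.sqrt_nonneg (p:ℝ), Nat.cast_nonneg (α := ℝ) p.sqrt]

lemma omega_lt_q1 : Real.sqrt p < p.sqrt + 1 := by
  have h := lt_q_succ_sq (p := p)
  have h' : (p:ℝ) < ((p.sqrt:ℝ) + 1)^2 := by exact_mod_cast h
  nlinarith [omega_sq hp, Real.sqrt_nonneg (p:ℝ), Nat.cast_nonneg (α := ℝ) p.sqrt]

include h2

lemma A_pos : ∀ i, 1 ≤ cfA p i := by
  intro i
  cases i with
  | zero =>
      have := q_pos hp
      rw [cfA_eq, M_zero, D_zero]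
      simpa using this
  | succ i =>
      obtain ⟨d1, m1, mq, qlt, dle, dd, ad⟩ := good hp h2 i
      rw [cfA_eq]
      rw [Nat.one_le_div_iff (by omega)]
      omega

lemma H_pos : ∀ n, 1 ≤ cfH p (n+1) := by
  intro n
  induction n using Nat.strong_induction_on with
  | _ n ih =>
      match n with
      | 0 => exact le_of_eq rfl
      | Nat.succ n =>
          rw [H_succ]
          have h1 := ih n (by omega)
          have h2' := A_pos hp h2 (n+1)
          have := Nat.mul_le_mul h2' h1
          omega

lemma H_mono : ∀ n, cfH p (n+1) ≤ cfH p (n+2) := by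
  intro n
  rw [H_succ]
  have h1 := H_pos hp h2 n
  have h2' := A_pos hp h2 (n+1)
  have := Nat.mul_le_mul h2' (le_refl (cfH p (n+1)))
  omega

lemma H_mono' : ∀ m n, m ≤ n → cfH p (m+1) ≤ cfH p (n+1) := by
  intro m n h
  induction n with
  | zero => simp at h; subst h; rfl
  | succ n ih =>
      rcases Nat.lt_or_ge m (n+1) with h' | h'
      · exact le_trans (ih (by omega)) (H_mono hp h2 n)
      · have : m = n+1 := by omega
        subst this; rfl

lemma H_unbounded : ∀ n, n + 1 ≤ cfH p (n+2) := by
  intro n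
  induction n using Nat.strong_induction_on with
  | _ n ih =>
      match n with
      | 0 =>
          have := A_pos hp h2 1
          rw [H_succ]
          have e1 : cfH p (0+1) = 1 := rfl
          have e0 : cfH p 0 = 0 := rfl
          rw [e1, e0]
          have e2 : cfA p (0+1) = cfA p 1 := rfl
          rw [e2]
          omega
      | Nat.succ n =>
          have h1 := ih n (by omega)
          have h2' := A_pos hp h2 (n+2)
          have h3 := H_pos hp h2 n
          rw [H_succ]
          have h5 : 1 * cfH p (n+2) ≤ cfA p (n+2) * cfH p (n+2) :=
            Nat.mul_le_mul h2' (le_refl _)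
          have hlink : cfA p (n+1+1) * cfH p (n+1+1) = cfA p (n+2) * cfH p (n+2) := rfl
          omega

/-- choose the convergent window containing `y` -/
lemma exists_window (y : ℕ) (hy : 1 ≤ y) :
    ∃ n, cfH p (n+1) ≤ y ∧ y < cfH p (n+2) := by
  classical
  have hex : ∃ n, y < cfH p (n+2) := ⟨y, by have := H_unbounded hp h2 y; omega⟩
  have hn := Nat.find_spec hex
  match hfind : Nat.find hex with
  | 0 =>
      rw [hfind] at hn
      exact ⟨0, by rw [H_one]; omega, hn⟩
  | Nat.succ m =>
      rw [hfind] at hn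
      have hmin := Nat.find_min hex (m := m) (by omega)
      push_neg at hmin
      exact ⟨m+1, hmin, hn⟩

/-- key identity: `E (n+1) * T n = (-1)^n * d_{n+1}` -/
lemma keyC (n : ℕ) : Ee p (n+1) * Tt p n = (-1)^n * D p (n+1) := by
  have R1R : (cfG p (n+1) : ℝ) = M p (n+1) * cfH p (n+1) + D p (n+1) * cfH p n := by
    exact_mod_cast (R12 hp h2 n).1
  have normER : (cfG p (n+1):ℝ)^2 - p * (cfH p (n+1):ℝ)^2 = (-1)^(n+1) * D p (n+1) := by
    exact_mod_cast normEq hp h2 n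
  have hω2 := omega_sq hp
  unfold Ee Tt
  linear_combination ((cfH p (n+1):ℝ)^2) * hω2
    + ((cfG p (n+1):ℝ) - Real.sqrt p * cfH p (n+1)) * R1R - normER

lemma Tt_pos (n : ℕ) : 0 < Tt p n := by
  unfold Tt
  have h1 := H_pos hp h2 n
  have h2' : (0:ℝ) < Real.sqrt p := by
    have := omega_gt_one hp; linarith
  have h3 : (1:ℝ) ≤ cfH p (n+1) := by exact_mod_cast h1
  have h4 : (0:ℝ) ≤ (M p (n+1) : ℝ) := by positivity
  have h5 : (0:ℝ) ≤ (D p (n+1) : ℝ) * cfH p n := by positivity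
  nlinarith

lemma Ff_mul_Tt (n : ℕ) : Ff p n * Tt p n = D p (n+1) := by
  have h := keyC hp h2 n
  have hs : ((-1:ℝ)^n) * ((-1:ℝ)^n) = 1 := by
    rw [← pow_add]; exact Even.neg_one_pow ⟨n, by ring⟩
  unfold Ff
  calc (-1:ℝ)^n * Ee p (n+1) * Tt p n = (-1:ℝ)^n * ((-1)^n * D p (n+1)) := by
        rw [mul_assoc, h]
    _ = (D p (n+1) : ℝ) := by rw [← mul_assoc, hs, one_mul]

lemma Ff_pos (n : ℕ) : 0 < Ff p n := by
  have h := Ff_mul_Tt hp h2 n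
  have hT := Tt_pos hp h2 n
  have hD : (0:ℝ) < D p (n+1) := by
    have h1 := D_pos' hp h2 (n+1)
    have : (1:ℝ) ≤ (D p (n+1) : ℝ) := by exact_mod_cast h1
    linarith
  nlinarith [h, hT, hD]

lemma Ee_eq_sign (n : ℕ) : Ee p (n+1) = (-1)^n * Ff p n := by
  unfold Ff
  have hs : ((-1:ℝ)^n) * ((-1:ℝ)^n) = 1 := by
    rw [← pow_add]; exact Even.neg_one_pow ⟨n, by ring⟩
  calc Ee p (n+1) = ((-1:ℝ)^n * (-1:ℝ)^n) * Ee p (n+1) := by rw [hs, one_mul]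
    _ = (-1)^n * ((-1)^n * Ee p (n+1)) := by ring

/-- AD ≤ q + M, as a standalone fact -/
lemma AD_le (i : ℕ) : cfA p i * D p i ≤ p.sqrt + M p i := by
  rw [cfA_eq]; exact Nat.div_mul_le_self _ _

lemma AD_gt (i : ℕ) : p.sqrt + M p i < cfA p i * D p i + D p i := by
  have hD := D_pos' hp h2 i
  have h1 := Nat.div_add_mod (p.sqrt + M p i) (D p i)
  have h2' := Nat.mod_lt (p.sqrt + M p i) (show 0 < D p i by omega)
  have h3 : cfA p i * D p i = D p i * ((p.sqrt + M p i) / D p i) := by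
    rw [cfA_eq, Nat.mul_comm]
  omega

lemma Tt_gt (n : ℕ) : (D p (n+1) : ℝ) * cfH p (n+2) < Tt p n := by
  unfold Tt
  have h1 : (cfH p (n+2) : ℝ) = cfA p (n+1) * cfH p (n+1) + cfH p n := by
    exact_mod_cast congrArg (Nat.cast : ℕ → ℝ) (H_succ (p := p) n)
  rw [h1]
  have h2' : (cfA p (n+1) : ℝ) * D p (n+1) ≤ p.sqrt + M p (n+1) := by
    exact_mod_cast AD_le hp h2 (n+1)
  have h3 := q_lt_omega hp
  have h4 : (1:ℝ) ≤ cfH p (n+1) := by exact_mod_cast H_pos hp h2 n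
  nlinarith

lemma Tt_lt (n : ℕ) : Tt p n < (D p (n+1) : ℝ) * (cfH p (n+2) + cfH p (n+1)) := by
  unfold Tt
  have h1 : (cfH p (n+2) : ℝ) = cfA p (n+1) * cfH p (n+1) + cfH p n := by
    exact_mod_cast congrArg (Nat.cast : ℕ → ℝ) (H_succ (p := p) n)
  rw [h1]
  have h2n : p.sqrt + M p (n+1) + 1 ≤ cfA p (n+1) * D p (n+1) + D p (n+1) := by
    have := AD_gt hp h2 (n+1); omega
  have h2' : (p.sqrt : ℝ) + M p (n+1) + 1 ≤ cfA p (n+1) * D p (n+1) + D p (n+1) := by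
    exact_mod_cast h2n
  have h3 := omega_lt_q1 hp
  have h4 : (1:ℝ) ≤ cfH p (n+1) := by exact_mod_cast H_pos hp h2 n
  have hgap : Real.sqrt p + M p (n+1) <
      (cfA p (n+1) : ℝ) * D p (n+1) + D p (n+1) := by linarith
  nlinarith [hgap, h4]

end
section
variable {p : ℕ} (hp : p.Prime) (h2 : p ≠ 2)

/-- basis decomposition of an integer pair along two consecutive convergents -/
lemma basis (n : ℕ) (x y : ℤ) : ∃ c e : ℤ,
    (x = c * cfG p (n+1) + e * cfG p (n+2) ∧ y = c * cfH p (n+1) + e * cfH p (n+2))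
    ∧ y * cfG p (n+1) - x * cfH p (n+1) = (-1)^(n+1) * e := by
  obtain ⟨ε, hεd⟩ : ∃ ε : ℤ, ε = (-1)^(n+1) := ⟨_, rfl⟩
  have hε2 : ε * ε = 1 := by
    rw [hεd, ← pow_add]; exact Even.neg_one_pow ⟨n+1, by ring⟩
  have hW : (cfG p (n+2) : ℤ) * cfH p (n+1) - cfG p (n+1) * cfH p (n+2) = (-1)^(n+2) :=
    wronskian (n+1)
  have hW' : (cfG p (n+2) : ℤ) * cfH p (n+1) - cfG p (n+1) * cfH p (n+2) = -ε := by
    rw [hW, hεd, pow_succ, pow_succ]; ring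
  refine ⟨ε * (x * cfH p (n+2) - y * cfG p (n+2)),
    ε * (y * cfG p (n+1) - x * cfH p (n+1)), ⟨?_, ?_⟩, ?_⟩
  · linear_combination (ε*x) * hW' + (-x) * hε2
  · linear_combination (ε*y) * hW' + (-y) * hε2
  · rw [← hεd]
    linear_combination (-(y*(cfG p (n+1):ℤ) - x*(cfH p (n+1):ℤ))) * hε2

include hp h2

set_option maxHeartbeats 3000000 in
/-- any positive solution of the Pell equation has `y ≥ h_{l-1}` -/
theorem sol_ge : ∀ x y : ℤ, 0 < y → x^2 - p*y^2 = 1 →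
    (cfH p (cfPeriod p) : ℤ) ≤ y := by
  have main : ∀ x y : ℤ, 0 < x → 0 < y → x^2 - p*y^2 = 1 →
      (cfH p (cfPeriod p) : ℤ) ≤ y := by
    intro x y hx hy hsol
    have hp2 : (2:ℤ) ≤ p := by exact_mod_cast hp.two_le
    have hcop : IsCoprime x y := ⟨x, -((p:ℤ))*y, by linear_combination hsol⟩
    set yn := y.toNat with hyndef
    have hyn : (yn:ℤ) = y := Int.toNat_of_nonneg hy.le
    obtain ⟨n, hw1, hw2⟩ := exists_window hp h2 yn (by omega)
    set ω := Real.sqrt p with hωdef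
    have hω2 : ω^2 = p := omega_sq hp
    have hω1 : 1 < ω := omega_gt_one hp
    have hyR : (1:ℝ) ≤ (y:ℝ) := by exact_mod_cast hy
    have hxR : (0:ℝ) < (x:ℝ) := by exact_mod_cast hx
    have hprod : ((x:ℝ) - ω*y) * ((x:ℝ) + ω*y) = 1 := by
      have h1 : (x:ℝ)^2 - p * (y:ℝ)^2 = 1 := by exact_mod_cast hsol
      linear_combination h1 - (y:ℝ)^2 * hω2
    have hxpos : (0:ℝ) < (x:ℝ) + ω*y := by nlinarith
    have hgap : 0 < (x:ℝ) - ω*y := by nlinarith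
    have hsmall : ((x:ℝ) - ω*y) * (2*ω*y) < 1 := by
      have hlt : 2*ω*(y:ℝ) < (x:ℝ) + ω*y := by nlinarith
      calc ((x:ℝ) - ω*y) * (2*ω*y) < ((x:ℝ) - ω*y) * ((x:ℝ) + ω*y) :=
            mul_lt_mul_of_pos_left hlt hgap
        _ = 1 := hprod
    obtain ⟨c, e, ⟨hx1, hy1⟩, he⟩ := basis (p := p) n x y
    by_cases he0 : e = 0
    · -- (x, y) is the n-th convergent
      rw [he0] at hx1 hy1
      simp only [zero_mul, add_zero] at hx1 hy1
      have hdvd : c ∣ x := ⟨cfG p (n+1), hx1⟩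
      have hdvd' : c ∣ y := ⟨cfH p (n+1), hy1⟩
      have hunit := hcop.isUnit_of_dvd' hdvd hdvd'
      rcases Int.isUnit_iff.1 hunit with h1 | h1
      · -- c = 1
        rw [h1, one_mul] at hx1 hy1
        -- norm forces d_{n+1} = 1
        have hnorm := normEq hp h2 n
        rw [← hx1, ← hy1] at hnorm
        have hDval : (D p (n+1) : ℤ) = (-1)^(n+1) := by
          calc (D p (n+1) : ℤ) = (-1)^(n+1) * ((-1)^(n+1) * D p (n+1)) := by
                have hε2 : ((-1:ℤ)^(n+1)) * ((-1)^(n+1)) = 1 := by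
                  rw [← pow_add]; exact Even.neg_one_pow ⟨n+1, by ring⟩
                linear_combination (-(D p (n+1) : ℤ)) * hε2
            _ = (-1)^(n+1) * (x^2 - p*y^2) := by rw [← hnorm]
            _ = (-1)^(n+1) := by rw [hsol, mul_one]
        have hDnat : D p (n+1) = 1 := by
          have hD1' := D_pos' hp h2 (n+1)
          rcases Nat.even_or_odd (n+1) with hev | hod
          · have : ((-1:ℤ))^(n+1) = 1 := Even.neg_one_pow hev
            rw [this] at hDval
            exact_mod_cast hDval
          · have : ((-1:ℤ))^(n+1) = -1 := Odd.neg_one_pow hod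
            rw [this] at hDval
            exfalso
            have : (1:ℤ) ≤ D p (n+1) := by exact_mod_cast hD1'
            omega
        have hst := D_one_imp hp h2 (by omega) hDnat
        have hdv := period_dvd hp h2 hst
        have hl := period_pos hp h2
        have hle : cfPeriod p ≤ n+1 := Nat.le_of_dvd (by omega) hdv
        obtain ⟨l', hl'⟩ : ∃ l', cfPeriod p = l' + 1 := ⟨cfPeriod p - 1, by omega⟩
        have hmono := H_mono' hp h2 l' n (by omega)
        rw [← hl'] at hmono
        rw [hy1]
        exact_mod_cast hmono
      · -- c = -1 is impossible since y > 0
        exfalso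
        rw [h1] at hy1
        have hH := H_pos hp h2 n
        have : (1:ℤ) ≤ cfH p (n+1) := by exact_mod_cast hH
        omega
    · by_cases hc0 : c = 0
      · exfalso
        rw [hc0, zero_mul, zero_add] at hy1
        have hH2 : (1:ℤ) ≤ cfH p (n+2) := by exact_mod_cast H_pos hp h2 (n+1)
        have he1 : 1 ≤ e := by nlinarith
        have : (cfH p (n+2) : ℤ) ≤ y := by nlinarith
        have hlt : (y:ℤ) < cfH p (n+2) := by
          rw [← hyn]; exact_mod_cast hw2
        omega
      · -- both coefficients nonzero: impossible
        exfalso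
        have hH1 : (1:ℤ) ≤ cfH p (n+1) := by exact_mod_cast H_pos hp h2 n
        have hH2 : (1:ℤ) ≤ cfH p (n+2) := by exact_mod_cast H_pos hp h2 (n+1)
        have hylt : y < (cfH p (n+2) : ℤ) := by rw [← hyn]; exact_mod_cast hw2
        have hsign : (c ≤ -1 ∧ 1 ≤ e) ∨ (1 ≤ c ∧ e ≤ -1) := by
          rcases lt_or_gt_of_ne he0 with h | h
          · -- e < 0
            right
            constructor
            · by_contra hcon
              push_neg at hcon
              have hc1 : c ≤ -1 := by omega
              have he1 : e ≤ -1 := by omega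
              have t1 : c * cfH p (n+1) ≤ (-1) * cfH p (n+1) :=
                mul_le_mul_of_nonneg_right hc1 (by omega)
              have t2 : e * cfH p (n+2) ≤ (-1) * cfH p (n+2) :=
                mul_le_mul_of_nonneg_right he1 (by omega)
              have t3 : (-1) * (cfH p (n+1):ℤ) = -(cfH p (n+1):ℤ) := by ring
              have t4 : (-1) * (cfH p (n+2):ℤ) = -(cfH p (n+2):ℤ) := by ring
              omega
            · omega
          · left
            constructor
            · by_contra hcon
              push_neg at hcon
              have hc1 : 1 ≤ c := by omega
              have he1 : 1 ≤ e := by omega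
              have t1 : 1 * (cfH p (n+1):ℤ) ≤ c * cfH p (n+1) :=
                mul_le_mul_of_nonneg_right hc1 (by omega)
              have t2 : 1 * (cfH p (n+2):ℤ) ≤ e * cfH p (n+2) :=
                mul_le_mul_of_nonneg_right he1 (by omega)
              have t3 : 1 * (cfH p (n+1):ℤ) = (cfH p (n+1):ℤ) := by ring
              have t4 : 1 * (cfH p (n+2):ℤ) = (cfH p (n+2):ℤ) := by ring
              omega
            · omega
        -- real expansion
        have hx1R : (x:ℝ) = c * cfG p (n+1) + e * cfG p (n+2) := by exact_mod_cast hx1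
        have hy1R : (y:ℝ) = c * cfH p (n+1) + e * cfH p (n+2) := by exact_mod_cast hy1
        have hexp : (x:ℝ) - ω*y = -((c:ℝ) * Ee p (n+1) + (e:ℝ) * Ee p (n+2)) := by
          unfold Ee
          rw [← hωdef]
          linear_combination hx1R - ω * hy1R
        have hE1 := Ee_eq_sign hp h2 n
        have hE2 := Ee_eq_sign hp h2 (n+1)
        have hpow : ((-1:ℝ))^(n+1) = -((-1:ℝ))^n := by rw [pow_succ]; ring
        have key : (x:ℝ) - ω*y
            = (-1:ℝ)^n * ((-(c:ℝ)) * Ff p n + (e:ℝ) * Ff p (n+1)) := by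
          rw [hexp, hE1, hE2, hpow]; ring
        have hF1 := Ff_pos hp h2 n
        have hF2 := Ff_pos hp h2 (n+1)
        have hge : Ff p n + Ff p (n+1) ≤ (x:ℝ) - ω*y := by
          rcases Nat.even_or_odd n with hev | hod
          · have hs : ((-1:ℝ))^n = 1 := Even.neg_one_pow hev
            rw [hs, one_mul] at key
            rcases hsign with ⟨h1', h2'⟩ | ⟨h1', h2'⟩
            · have hc : (c:ℝ) ≤ -1 := by exact_mod_cast h1'
              have he' : (1:ℝ) ≤ (e:ℝ) := by exact_mod_cast h2'
              nlinarith
            · have hc : (1:ℝ) ≤ (c:ℝ) := by exact_mod_cast h1'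
              have he' : (e:ℝ) ≤ -1 := by exact_mod_cast h2'
              nlinarith
          · have hs : ((-1:ℝ))^n = -1 := Odd.neg_one_pow hod
            rw [hs] at key
            rcases hsign with ⟨h1', h2'⟩ | ⟨h1', h2'⟩
            · have hc : (c:ℝ) ≤ -1 := by exact_mod_cast h1'
              have he' : (1:ℝ) ≤ (e:ℝ) := by exact_mod_cast h2'
              nlinarith
            · have hc : (1:ℝ) ≤ (c:ℝ) := by exact_mod_cast h1'
              have he' : (e:ℝ) ≤ -1 := by exact_mod_cast h2'
              nlinarith
        -- the integer y*G - x*H is nonzero hence has absolute value at least 1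
        have hz : y * (cfG p (n+1):ℤ) - x * cfH p (n+1) ≠ 0 := by
          rw [he]
          intro hzz
          rcases mul_eq_zero.1 hzz with h | h
          · exact absurd h (pow_ne_zero _ (by norm_num))
          · exact he0 h
        have habsZ : (1:ℤ) ≤ |y * (cfG p (n+1):ℤ) - x * cfH p (n+1)| :=
          Int.one_le_abs hz
        have habs : (1:ℝ) ≤ |(y:ℝ) * cfG p (n+1) - (x:ℝ) * cfH p (n+1)| := by
          have h11 : ((1:ℤ):ℝ) ≤ ((|y * (cfG p (n+1):ℤ) - x * cfH p (n+1)| : ℤ) : ℝ) := by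
            exact_mod_cast habsZ
          rw [Int.cast_abs] at h11
          push_cast at h11
          exact_mod_cast h11
        -- |G - ω H| = Ff p n
        have hFabs : |(cfG p (n+1):ℝ) - ω * cfH p (n+1)| = Ff p n := by
          have hEe : (cfG p (n+1):ℝ) - ω * cfH p (n+1) = -Ee p (n+1) := by
            unfold Ee; rw [← hωdef]; ring
          rw [hEe, abs_neg, hE1, abs_mul, abs_pow, abs_neg, abs_one, one_pow,
            one_mul, abs_of_pos hF1]
        have hidv : (y:ℝ) * cfG p (n+1) - (x:ℝ) * cfH p (n+1)
            = (y:ℝ)*((cfG p (n+1):ℝ) - ω*cfH p (n+1))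
              - (cfH p (n+1):ℝ)*((x:ℝ) - ω*y) := by ring
        have hH1y : (cfH p (n+1):ℝ) ≤ (y:ℝ) := by
          have : (cfH p (n+1):ℤ) ≤ y := by rw [← hyn]; exact_mod_cast hw1
          exact_mod_cast this
        have hHn : (0:ℝ) ≤ (cfH p (n+1):ℝ) := by positivity
        have hyRpos : (0:ℝ) < (y:ℝ) := by linarith
        have hub : |(y:ℝ) * cfG p (n+1) - (x:ℝ) * cfH p (n+1)|
            ≤ (y:ℝ) * Ff p n + (cfH p (n+1):ℝ) * ((x:ℝ) - ω*y) := by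
          rw [hidv]
          calc |(y:ℝ)*((cfG p (n+1):ℝ) - ω*cfH p (n+1))
                - (cfH p (n+1):ℝ)*((x:ℝ) - ω*y)|
              ≤ |(y:ℝ)*((cfG p (n+1):ℝ) - ω*cfH p (n+1))|
                + |(cfH p (n+1):ℝ)*((x:ℝ) - ω*y)| := abs_sub _ _
            _ = (y:ℝ) * Ff p n + (cfH p (n+1):ℝ) * ((x:ℝ) - ω*y) := by
                rw [abs_mul, abs_mul, hFabs, abs_of_pos hyRpos,
                  abs_of_nonneg hHn, abs_of_pos hgap]
        have hstep1 : (y:ℝ) * Ff p n < (y:ℝ) * ((x:ℝ) - ω*y) := by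
          have : Ff p n < (x:ℝ) - ω*y := by linarith
          exact mul_lt_mul_of_pos_left this hyRpos
        have hstep2 : (cfH p (n+1):ℝ) * ((x:ℝ) - ω*y) ≤ (y:ℝ) * ((x:ℝ) - ω*y) :=
          mul_le_mul_of_nonneg_right hH1y hgap.le
        have h9 : (1:ℝ) < 2*(y:ℝ)*((x:ℝ) - ω*y) := by
          calc (1:ℝ) ≤ |(y:ℝ) * cfG p (n+1) - (x:ℝ) * cfH p (n+1)| := habs
            _ ≤ (y:ℝ) * Ff p n + (cfH p (n+1):ℝ) * ((x:ℝ) - ω*y) := hub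
            _ < 2*(y:ℝ)*((x:ℝ) - ω*y) := by linarith
        have hωpos : (0:ℝ) < ω := by linarith
        nlinarith [hsmall, h9, hω1, hωpos]
  intro x y hy hsol
  rcases lt_trichotomy x 0 with hx | hx | hx
  · exact main (-x) y (by omega) hy (by linear_combination hsol)
  · exfalso
    rw [hx] at hsol
    have hp2 : (2:ℤ) ≤ p := by exact_mod_cast hp.two_le
    nlinarith [sq_nonneg y]
  · exact main x y hx hy hsol

end
section
variable {p : ℕ} (hp : p.Prime) (h2 : p ≠ 2) (h3 : p % 4 = 3)
include hp h2 h3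

/-- factorization of `h_{l-1}` at the middle of the period -/
lemma Hl_factor :
    cfH p (cfPeriod p) = cfH p (cfPeriod p / 2) * cfG p (cfPeriod p / 2) := by
  have hl := period_pos hp h2
  have heven := period_even hp h2 h3
  obtain ⟨hD2, hA⟩ := D_mid_two hp h2 h3
  obtain ⟨k', hk'⟩ : ∃ k', cfPeriod p / 2 = k' + 1 := ⟨cfPeriod p / 2 - 1, by omega⟩
  have hprod := prodId hp h2 k' (k'+1) (by omega)
  have R1 := (R12 hp h2 k').1
  rw [hk'] at hD2 hA
  rw [hD2] at R1
  have Gnat : cfG p (k'+1) = M p (k'+1) * cfH p (k'+1) + 2 * cfH p k' := by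
    exact_mod_cast R1
  have hHs : cfH p (k'+2) = cfA p (k'+1) * cfH p (k'+1) + cfH p k' := H_succ k'
  rw [hA] at hHs
  have hsum : cfH p (k'+2) + cfH p k' = cfG p (k'+1) := by omega
  rw [hk']
  calc cfH p (cfPeriod p) = cfH p (k'+1) * cfH p (k'+2) + cfH p k' * cfH p (k'+1) :=
        hprod.symm
    _ = cfH p (k'+1) * (cfH p (k'+2) + cfH p k') := by ring
    _ = cfH p (k'+1) * cfG p (k'+1) := by rw [hsum]

/-- `p` does not divide the middle numerator -/
lemma p_not_dvd_G : ¬ p ∣ cfG p (cfPeriod p / 2) := by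
  intro hdvd
  have hl := period_pos hp h2
  have heven := period_even hp h2 h3
  obtain ⟨hD2, _⟩ := D_mid_two hp h2 h3
  obtain ⟨k', hk'⟩ : ∃ k', cfPeriod p / 2 = k' + 1 := ⟨cfPeriod p / 2 - 1, by omega⟩
  have hnorm := normEq hp h2 k'
  rw [hk'] at hD2 hdvd
  rw [hD2] at hnorm
  -- p ∣ G implies p ∣ ±2
  have h1 : (p:ℤ) ∣ (cfG p (k'+1) : ℤ) := Int.natCast_dvd_natCast.2 hdvd
  have h2' : (p:ℤ) ∣ (cfG p (k'+1) : ℤ)^2 - p * (cfH p (k'+1):ℤ)^2 :=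
    dvd_sub (Dvd.dvd.mul_right h1 _ |>.trans (by rw [sq])) (dvd_mul_right _ _)
  rw [hnorm] at h2'
  have h3' : (p:ℤ) ∣ 2 := by
    rcases Nat.even_or_odd (k'+1) with hev | hod
    · rw [Even.neg_one_pow hev, one_mul] at h2'
      exact_mod_cast h2'
    · rw [Odd.neg_one_pow hod] at h2'
      have := (dvd_neg (α := ℤ)).2 h2'
      simpa using this
  have : (p : ℤ) ≤ 2 := Int.le_of_dvd (by norm_num) h3'
  have hp3 : 3 ≤ p := by
    have := hp.two_le
    omega
  omega

end

theorem stmt10' (p : ℕ) (hp : p.Prime) (h3 : p % 4 = 3)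
    (u : Pell.Solution₁ (p : ℤ)) (hu : Pell.IsFundamental u) :
    (p : ℤ) ∣ u.y ↔ p ∣ cfH p (cfPeriod p / 2) := by
  have h2 : p ≠ 2 := by intro h; rw [h] at h3; norm_num at h3
  have hl := period_pos hp h2
  have heven := period_even hp h2 h3
  -- the solution coming from the period
  obtain ⟨l', hl'⟩ : ∃ l', cfPeriod p = l' + 1 := ⟨cfPeriod p - 1, by omega⟩
  have hnorm := normEq hp h2 l'
  rw [← hl', D_period_one hp h2, Even.neg_one_pow (Nat.even_iff.2 heven)] at hnorm
  push_cast at hnorm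
  try rw [one_mul] at hnorm
  have hH1 : (1:ℤ) ≤ (cfH p (cfPeriod p) : ℤ) := by
    have := H_pos hp h2 l'
    rw [← hl'] at this
    exact_mod_cast this
  set s : Pell.Solution₁ (p:ℤ) :=
    Pell.Solution₁.mk (cfG p (cfPeriod p)) (cfH p (cfPeriod p)) hnorm with hs
  have hsx : 1 < s.x := by
    rw [hs, Pell.Solution₁.x_mk]
    have hp2 : (2:ℤ) ≤ p := by exact_mod_cast hp.two_le
    have hG0 : (0:ℤ) ≤ (cfG p (cfPeriod p) : ℤ) := by positivity
    nlinarith [hnorm, hH1, hG0]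
  have hsy : 0 < s.y := by
    rw [hs, Pell.Solution₁.y_mk]
    omega
  have hle : u.y ≤ (cfH p (cfPeriod p) : ℤ) := by
    have := hu.y_le_y hsx hsy
    rwa [hs, Pell.Solution₁.y_mk] at this
  have hge := sol_ge hp h2 u.x u.y hu.2.1 u.prop
  have huy : u.y = (cfH p (cfPeriod p) : ℤ) := le_antisymm hle hge
  rw [huy, Int.natCast_dvd_natCast, Hl_factor hp h2 h3]
  constructor
  · intro h
    rcases (Nat.Prime.dvd_mul hp).1 h with h | h
    · exact h
    · exact absurd h (p_not_dvd_G hp h2 h3)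
  · intro h
    exact Dvd.dvd.mul_right h _

end Stmt10

theorem stmt10 (p : ℕ) (hp : p.Prime) (h3 : p % 4 = 3)
    (u : Pell.Solution₁ (p : ℤ)) (hu : Pell.IsFundamental u) :
    (p : ℤ) ∣ u.y ↔ p ∣ cfH p (cfPeriod p / 2) :=
  Stmt10.stmt10' p hp h3 u hu
end

section
/- Let p be a prime with p ≡ 3 (mod 4) such that √p = ⟨n; α, β, α, 2n⟩ has period length 4. Then p does not divide y, where x + y√p is the fundamental unit of ℚ(√p). -/
/-- `cfK p (i + 1)` is the numerator `kᵢ` of the `i`-th convergent, indexed like `cfH`. -/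
def cfK (p : ℕ) : ℕ → ℕ
  | 0 => 1
  | 1 => Nat.sqrt p
  | i + 2 => cfA p (i + 1) * cfK p (i + 1) + cfK p i

structure CFStateBounds (p : ℕ) (s : ℕ × ℕ) : Prop where
  fst_le : s.1 ≤ Nat.sqrt p
  snd_pos : 0 < s.2
  snd_le : s.2 ≤ Nat.sqrt p + s.1
  snd_dvd : s.2 ∣ p - s.1 ^ 2

section ContinuedFraction

variable {p i : ℕ}

lemma cfState_succ (p i : ℕ) :
    cfState p (i + 1) = (cfA p i * (cfState p i).2 - (cfState p i).1,
      (p - (cfA p i * (cfState p i).2 - (cfState p i).1) ^ 2) / (cfState p i).2) :=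
  rfl

lemma cfState_snd_succ (p i : ℕ) :
    (cfState p (i + 1)).2 = (p - (cfState p (i + 1)).1 ^ 2) / (cfState p i).2 :=
  rfl

lemma cfState_one (p : ℕ) : cfState p 1 = (Nat.sqrt p, p - Nat.sqrt p ^ 2) := by
  simp [cfState]

namespace CFStateBounds

lemma one_le_cfA (h : CFStateBounds p (cfState p i)) : 1 ≤ cfA p i :=
  (Nat.one_le_div_iff h.snd_pos).2 h.snd_le

lemma cfA_mul_snd (h : CFStateBounds p (cfState p i)) :
    cfA p i * (cfState p i).2 = (cfState p i).1 + (cfState p (i + 1)).1 := by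
  have hdiv := Nat.div_add_mod (Nat.sqrt p + (cfState p i).1) (cfState p i).2
  have hmod := Nat.mod_lt (Nat.sqrt p + (cfState p i).1) h.snd_pos
  have had := Nat.le_mul_of_pos_left (cfState p i).2 h.one_le_cfA
  have := h.fst_le
  rw [cfState_succ]
  unfold cfA at *
  rw [Nat.mul_comm] at hdiv
  omega

lemma fst_succ_le (h : CFStateBounds p (cfState p i)) : (cfState p (i + 1)).1 ≤ Nat.sqrt p := by
  have := h.cfA_mul_snd
  have := Nat.div_mul_le_self (Nat.sqrt p + (cfState p i).1) (cfState p i).2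
  unfold cfA at *
  omega

lemma snd_mul_snd_succ (h : CFStateBounds p (cfState p i)) :
    (cfState p i).2 * (cfState p (i + 1)).2 = p - (cfState p (i + 1)).1 ^ 2 := by
  set m := (cfState p i).1
  set d := (cfState p i).2
  set m' := (cfState p (i + 1)).1
  have hsqrt := Nat.sqrt_le' p
  have hm : m ^ 2 ≤ p := (Nat.pow_le_pow_left h.fst_le 2).trans hsqrt
  have hm' : m' ^ 2 ≤ p := (Nat.pow_le_pow_left h.fst_succ_le 2).trans hsqrt
  have hsum : (cfA p i * d : ℤ) = m + m' := by exact_mod_cast h.cfA_mul_snd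
  have hdvd : d ∣ p - m' ^ 2 := by
    obtain ⟨c, hc⟩ := h.snd_dvd
    refine Int.natCast_dvd_natCast.1 ⟨c - cfA p i * (cfA p i * d - 2 * m), ?_⟩
    have hc' : (p : ℤ) - m ^ 2 = d * c := by
      rw [← Nat.cast_pow, ← Nat.cast_sub hm]; exact_mod_cast hc
    push_cast [hm']
    linear_combination hc' + (cfA p i * d - m + m') * hsum
  rw [cfState_snd_succ, Nat.mul_div_cancel' hdvd]

lemma succ (hp : Nat.sqrt p ^ 2 < p) (h : CFStateBounds p (cfState p i)) :
    CFStateBounds p (cfState p (i + 1)) := by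
  have hprod := h.snd_mul_snd_succ
  have hsum := h.cfA_mul_snd
  have hm' := h.fst_succ_le
  have hm'sq : (cfState p (i + 1)).1 ^ 2 < p :=
    (Nat.pow_le_pow_left hm' 2).trans_lt hp
  refine ⟨hm', Nat.pos_of_mul_pos_left (hprod ▸ Nat.sub_pos_of_lt hm'sq), ?_,
    Dvd.intro_left _ hprod⟩
  -- with `n = ⌊√p⌋`: `n < d + m'` and `d d' = p - m'² < (n + 1 - m') (n + 1 + m')`
  -- force `d' ≤ n + m'`
  have hdm' : Nat.sqrt p + 1 ≤ (cfState p i).2 + (cfState p (i + 1)).1 := by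
    have := Nat.lt_div_mul_add (a := Nat.sqrt p + (cfState p i).1) h.snd_pos
    unfold cfA at hsum
    omega
  have hlt := Nat.lt_succ_sqrt' p
  by_contra! hd'
  have hprod' : (cfState p i).2 * (cfState p (i + 1)).2 + (cfState p (i + 1)).1 ^ 2 = p := by
    omega
  nlinarith

end CFStateBounds

lemma cfState_bounds (hp : Nat.sqrt p ^ 2 < p) : ∀ i, CFStateBounds p (cfState p i)
  | 0 => ⟨Nat.zero_le _, Nat.one_pos, Nat.sqrt_pos.2 (by omega), one_dvd _⟩
  | i + 1 => (cfState_bounds hp i).succ hp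

lemma cfK_mul_cfH_sub_cfH_mul_cfK (p : ℕ) : ∀ i,
    (cfK p (i + 1) * cfH p i : ℤ) - cfH p (i + 1) * cfK p i = (-1) ^ (i + 1)
  | 0 => by simp [cfK, cfH]
  | i + 1 => by
    have ih := cfK_mul_cfH_sub_cfH_mul_cfK p i
    simp only [cfK, cfH, Nat.cast_add, Nat.cast_mul] at ih ⊢
    linear_combination (-1) * ih

/-- Both identities say `√p = (kᵢ x + kᵢ₋₁) / (hᵢ x + hᵢ₋₁)` for the complete quotient
`x = (√p + mᵢ₊₁) / dᵢ₊₁`. -/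
lemma cfK_eq_and_mul_cfH_eq (hp : Nat.sqrt p ^ 2 < p) : ∀ i,
    (cfK p (i + 1) : ℤ) =
        (cfState p (i + 1)).1 * cfH p (i + 1) + (cfState p (i + 1)).2 * cfH p i ∧
      (p : ℤ) * cfH p (i + 1) =
        (cfState p (i + 1)).1 * cfK p (i + 1) + (cfState p (i + 1)).2 * cfK p i
  | 0 => by
    have hsq : ((p - Nat.sqrt p ^ 2 : ℕ) : ℤ) = p - Nat.sqrt p ^ 2 := by push_cast [hp.le]; ring
    simp only [zero_add, cfState_one, cfK, cfH, hsq]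
    constructor <;> push_cast <;> ring
  | i + 1 => by
    obtain ⟨hk, hh⟩ := cfK_eq_and_mul_cfH_eq hp i
    have h := cfState_bounds hp (i + 1)
    have hd : ((cfState p (i + 1)).2 : ℤ) ≠ 0 := by exact_mod_cast h.snd_pos.ne'
    have hsum : (cfA p (i + 1) * (cfState p (i + 1)).2 : ℤ) =
        (cfState p (i + 1)).1 + (cfState p (i + 2)).1 := by exact_mod_cast h.cfA_mul_snd
    have hprod : ((cfState p (i + 1)).2 * (cfState p (i + 2)).2 : ℤ) =
        p - (cfState p (i + 2)).1 ^ 2 := by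
      have hle := (Nat.pow_le_pow_left h.fst_succ_le 2).trans hp.le
      rw [← Nat.cast_pow, ← Nat.cast_sub hle]
      exact_mod_cast h.snd_mul_snd_succ
    simp only [cfK, cfH, Nat.cast_add, Nat.cast_mul]
    constructor <;> apply mul_left_cancel₀ hd
    · linear_combination (cfK p (i + 1) - (cfState p (i + 2)).1 * cfH p (i + 1) : ℤ) * hsum
        - cfH p (i + 1) * hprod + (cfState p (i + 2)).1 * hk - hh
    · linear_combination (p * cfH p (i + 1) - (cfState p (i + 2)).1 * cfK p (i + 1) : ℤ) * hsum
        - cfK p (i + 1) * hprod - p * hk + (cfState p (i + 2)).1 * hh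

lemma cfK_sq_sub_mul_cfH_sq (hp : Nat.sqrt p ^ 2 < p) (i : ℕ) :
    (cfK p (i + 1) : ℤ) ^ 2 - p * cfH p (i + 1) ^ 2 = (-1) ^ (i + 1) * (cfState p (i + 1)).2 := by
  obtain ⟨hk, hh⟩ := cfK_eq_and_mul_cfH_eq hp i
  linear_combination (cfK p (i + 1) : ℤ) * hk - (cfH p (i + 1) : ℤ) * hh
    + ((cfState p (i + 1)).2 : ℤ) * cfK_mul_cfH_sub_cfH_mul_cfK p i

lemma cfState_succ_eq_cfState_one (h : (cfState p i).2 = 1) :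
    cfState p (i + 1) = cfState p 1 := by
  rw [cfState_succ, cfState_one, cfA, h]
  simp

lemma cfPeriod_le {l : ℕ} (hl : 0 < l) (h : cfState p (l + 1) = cfState p 1) : cfPeriod p ≤ l :=
  Nat.sInf_le ⟨hl, h⟩

lemma cfState_cfPeriod_succ (hl : 0 < cfPeriod p) :
    cfState p (cfPeriod p + 1) = cfState p 1 :=
  (Nat.sInf_mem (Nat.nonempty_of_pos_sInf hl)).2

lemma cfState_cfPeriod_snd (hp : Nat.sqrt p ^ 2 < p) (hl : 0 < cfPeriod p) :
    (cfState p (cfPeriod p)).2 = 1 := by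
  have h := (cfState_bounds hp (cfPeriod p)).snd_mul_snd_succ
  rw [cfState_cfPeriod_succ hl, cfState_one] at h
  exact (mul_eq_right₀ (Nat.sub_pos_of_lt hp).ne').1 h

lemma two_le_cfState_snd (hp : Nat.sqrt p ^ 2 < p) (hi : 0 < i) (hil : i < cfPeriod p) :
    2 ≤ (cfState p i).2 := by
  have := (cfState_bounds hp i).snd_pos
  by_contra! h
  have := cfPeriod_le hi (cfState_succ_eq_cfState_one (p := p) (by omega))
  omega

lemma cfA_le_sqrt (hp : Nat.sqrt p ^ 2 < p) (hd : 2 ≤ (cfState p i).2) : cfA p i ≤ Nat.sqrt p :=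
  Nat.div_le_of_le_mul (by nlinarith [(cfState_bounds hp i).fst_le])

lemma cfPeriod_le_two (hp : Nat.sqrt p ^ 2 < p) (h : p ≤ Nat.sqrt p ^ 2 + 2) :
    cfPeriod p ≤ 2 := by
  have h1 := cfState_one p
  obtain hd1 | hd1 : (cfState p 1).2 = 1 ∨ (cfState p 1).2 = 2 := by rw [h1]; omega
  · exact (cfPeriod_le Nat.one_pos (cfState_succ_eq_cfState_one hd1)).trans one_le_two
  have hm2 : (cfState p 2).1 = Nat.sqrt p := by
    rw [cfState_succ, cfA, hd1, h1]
    dsimp only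
    omega
  have hd2 : (cfState p 2).2 = 1 := by
    rw [cfState_snd_succ, hm2, hd1]
    rw [h1] at hd1
    omega
  exact cfPeriod_le Nat.two_pos (cfState_succ_eq_cfState_one hd2)

lemma cfH_sq_modEq (hp : Nat.sqrt p ^ 2 < p) (hd : (cfState p (i + 1)).2 = 1)
    (hH : (p : ℤ) ∣ cfH p (i + 1)) : (cfH p i : ℤ) ^ 2 ≡ (-1) ^ (i + 1) [ZMOD p] := by
  obtain ⟨c, hc⟩ := hH
  have hd' : ((cfState p (i + 1)).2 : ℤ) = 1 := by exact_mod_cast hd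
  have hK : (cfK p (i + 1) : ℤ) ≡ cfH p i [ZMOD p] := by
    refine Int.modEq_iff_dvd.2 ⟨-(cfState p (i + 1)).1 * c, ?_⟩
    linear_combination (-1 : ℤ) * (cfK_eq_and_mul_cfH_eq hp i).1 - (cfState p (i + 1)).1 * hc
      - cfH p i * hd'
  have hK2 : (cfK p (i + 1) : ℤ) ^ 2 ≡ (-1) ^ (i + 1) [ZMOD p] := by
    refine Int.modEq_iff_dvd.2 ⟨-cfH p (i + 1) ^ 2, ?_⟩
    linear_combination (-1 : ℤ) * cfK_sq_sub_mul_cfH_sq hp i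
      - (-1) ^ (i + 1) * hd'
  exact (hK.pow 2).symm.trans hK2

end ContinuedFraction

lemma Pell.IsFundamental.dvd_y {d c : ℤ} {u : Pell.Solution₁ d} (hu : Pell.IsFundamental u)
    (h : c ∣ u.y) (v : Pell.Solution₁ d) : c ∣ v.y := by
  have hpow (n : ℕ) : c ∣ (u ^ n).y := by
    induction n with
    | zero => simp [Pell.Solution₁.y_one]
    | succ n ih =>
      rw [pow_succ, Pell.Solution₁.y_mul]
      exact dvd_add (h.mul_left _) (ih.mul_right _)
  have hzpow : ∀ n : ℤ, c ∣ (u ^ n).y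
    | .ofNat n => by simpa using hpow n
    | .negSucc n => by simpa [Pell.Solution₁.y_inv] using hpow (n + 1)
  obtain ⟨n, rfl | rfl⟩ := hu.eq_zpow_or_neg_zpow v
  · exact hzpow n
  · simpa [Pell.Solution₁.y_neg] using hzpow n

lemma Nat.Prime.le_add_two_of_add_one_sq_modEq_one {p x : ℕ} (hp : p.Prime) (hx : 0 < x)
    (hxp : x < p) (h : ((x + 1 : ℕ) : ℤ) ^ 2 ≡ 1 [ZMOD p]) : p ≤ x + 2 := by
  have hdvd : (p : ℤ) ∣ x * (x + 2 : ℕ) := by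
    obtain ⟨c, hc⟩ := Int.modEq_iff_dvd.1 h.symm
    exact ⟨c, by push_cast at hc ⊢; linear_combination hc⟩
  rcases Int.Prime.dvd_mul' hp hdvd with hx' | hx'
  · exact absurd (Nat.le_of_dvd hx (Int.natCast_dvd_natCast.1 hx')) hxp.not_ge
  · exact Nat.le_of_dvd (by omega) (Int.natCast_dvd_natCast.1 hx')

theorem stmt12_general (p : ℕ) (hp : p.Prime) (hl : cfPeriod p = 4)
    (u : Pell.Solution₁ (p : ℤ)) (hu : Pell.IsFundamental u) :
    ¬ (p : ℤ) ∣ u.y := by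
  intro hdvd
  have hsq : Nat.sqrt p ^ 2 < p := (Nat.sqrt_le' p).lt_of_ne fun h =>
    hp.prime.not_isSquare ⟨Nat.sqrt p, h.symm.trans (sq _)⟩
  have hd4 : (cfState p 4).2 = 1 := hl ▸ cfState_cfPeriod_snd hsq (by omega)
  have hpell : (cfK p 4 : ℤ) ^ 2 - p * cfH p 4 ^ 2 = 1 := by
    simpa [hd4] using cfK_sq_sub_mul_cfH_sq hsq 3
  have hH4 : (p : ℤ) ∣ cfH p 4 := hu.dvd_y hdvd (.mk _ _ hpell)
  have hH3 : (cfH p 3 : ℤ) ^ 2 ≡ 1 [ZMOD p] := by simpa using cfH_sq_modEq hsq hd4 hH4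
  have hbounds (i : ℕ) (hi : 0 < i) (hil : i < 4) : 1 ≤ cfA p i ∧ cfA p i ≤ Nat.sqrt p :=
    ⟨(cfState_bounds hsq i).one_le_cfA, cfA_le_sqrt hsq (two_le_cfState_snd hsq hi (hl ▸ hil))⟩
  obtain ⟨ha1, ha1'⟩ := hbounds 1 (by omega) (by omega)
  obtain ⟨ha2, ha2'⟩ := hbounds 2 (by omega) (by omega)
  have hprod : cfA p 2 * cfA p 1 ≤ Nat.sqrt p ^ 2 := by nlinarith
  have hp2 := hp.le_add_two_of_add_one_sq_modEq_one (x := cfA p 2 * cfA p 1)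
    (Nat.mul_pos ha2 ha1) (by omega) (by simpa [cfH] using hH3)
  have := cfPeriod_le_two hsq (by omega)
  omega

theorem stmt12 (p : ℕ) (hp : p.Prime) (h3 : p % 4 = 3) (hl : cfPeriod p = 4)
    (u : Pell.Solution₁ (p : ℤ)) (hu : Pell.IsFundamental u) :
    ¬ (p : ℤ) ∣ u.y :=
  stmt12_general p hp hl u hu
end

section
/- Let p be a prime, n = ⌊√p⌋, and write √p = ⟨n; α, β, …⟩ for its regular continued fraction. Then h₂ = αβ + 1 ≤ 2n. -/
/-!
Write `p = n² + t` with `1 ≤ t ≤ 2n` (`t ≠ 0` as a prime is not a square). The first two steps of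
the algorithm give the states `(n, t)` and `(n - r, 1 + α r)`, where `2n = α t + r`, `0 ≤ r < t`.
If `r = 0` the state `(n, 1)` is followed by `(n, t)` again and the period is at most `2`; so
`r ≥ 1`, and `β (1 + α r) ≤ 2n - r` yields `α β + 1 ≤ α β r + r ≤ 2n`.
-/

lemma exists_eq_sq_add_of_not_isSquare {p : ℕ} (hp : ¬IsSquare p) :
    ∃ n t : ℕ, p = n ^ 2 + t ∧ 0 < t ∧ t ≤ 2 * n := by
  refine ⟨Nat.sqrt p, p - Nat.sqrt p ^ 2, by have := Nat.sqrt_le' p; omega, ?_, ?_⟩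
  · have hne : Nat.sqrt p ^ 2 ≠ p := fun h => hp ⟨Nat.sqrt p, by rw [← sq, h]⟩
    have := Nat.sqrt_le' p
    omega
  · have := Nat.lt_succ_sqrt' p
    rw [Nat.succ_eq_add_one, add_sq] at this
    omega

lemma cfH_three (p : ℕ) : cfH p 3 = cfA p 1 * cfA p 2 + 1 := by
  simp only [cfH]
  ring

lemma cfState_succ_of_eq {p i m d : ℕ} (h : cfState p i = (m, d)) :
    cfState p (i + 1) =
      ((Nat.sqrt p + m) / d * d - m, (p - ((Nat.sqrt p + m) / d * d - m) ^ 2) / d) := by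
  rw [cfState, h]

lemma cfPeriod_le_of_cfState_eq {p l : ℕ} (hl : 0 < l) (h : cfState p (l + 1) = cfState p 1) :
    cfPeriod p ≤ l :=
  Nat.sInf_le ⟨hl, h⟩

lemma two_mul_mod_lt_of_le {a b : ℕ} (hb : 0 < b) (hba : b ≤ a) : 2 * (a % b) < a := by
  have := Nat.div_add_mod a b
  have := Nat.mod_lt a hb
  have := Nat.le_mul_of_pos_right b ((Nat.one_le_div_iff hb).mpr hba)
  omega

section FirstSteps

variable {n t : ℕ}

lemma cfState_one_s13 (ht : t ≤ 2 * n) : cfState (n ^ 2 + t) 1 = (n, t) := by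
  rw [cfState_succ_of_eq (i := 0) rfl, Nat.sqrt_add_eq' n (by omega)]
  simp

lemma cfA_one (ht : t ≤ 2 * n) : cfA (n ^ 2 + t) 1 = 2 * n / t := by
  rw [cfA, cfState_one_s13 ht, Nat.sqrt_add_eq' n (by omega), two_mul]

lemma cfState_two (ht₀ : 0 < t) (ht : t ≤ 2 * n) :
    cfState (n ^ 2 + t) 2 = (n - 2 * n % t, 1 + 2 * n / t * (2 * n % t)) := by
  rw [cfState_succ_of_eq (cfState_one_s13 ht), Nat.sqrt_add_eq' n (by omega), ← two_mul]
  have hrn := two_mul_mod_lt_of_le ht₀ ht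
  set α := 2 * n / t
  set r := 2 * n % t
  have hdiv : t * α + r = 2 * n := Nat.div_add_mod _ _
  have hm : α * t - n = n - r := by rw [mul_comm]; omega
  -- `p - (n - r)² = t (1 + α r)` is the identity `n² - (n - r)² = r (2n - r) = r α t`.
  have hd : n ^ 2 + t - (n - r) ^ 2 = t * (1 + α * r) := by
    obtain ⟨u, hu⟩ : ∃ u, n = u + r := ⟨n - r, by omega⟩
    have htu : t * α = 2 * u + r := by omega
    rw [hu, Nat.add_sub_cancel, Nat.sub_eq_of_eq_add]
    linear_combination r * htu.symm
  rw [hm, hd, Nat.mul_div_cancel_left _ ht₀]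

lemma cfA_two (ht₀ : 0 < t) (ht : t ≤ 2 * n) :
    cfA (n ^ 2 + t) 2 = (2 * n - 2 * n % t) / (1 + 2 * n / t * (2 * n % t)) := by
  rw [cfA, cfState_two ht₀ ht, Nat.sqrt_add_eq' n (by omega)]
  have := two_mul_mod_lt_of_le ht₀ ht
  congr 1
  omega

lemma cfPeriod_le_two_of_dvd (ht₀ : 0 < t) (ht : t ≤ 2 * n) (hdvd : t ∣ 2 * n) :
    cfPeriod (n ^ 2 + t) ≤ 2 := by
  have hs₂ : cfState (n ^ 2 + t) 2 = (n, 1) := by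
    rw [cfState_two ht₀ ht, Nat.mod_eq_zero_of_dvd hdvd]
    simp
  refine cfPeriod_le_of_cfState_eq two_pos ?_
  rw [cfState_succ_of_eq hs₂, cfState_one_s13 ht, Nat.sqrt_add_eq' n (by omega)]
  simp only [Nat.div_one, mul_one, Nat.add_sub_cancel, Nat.add_sub_cancel_left]

end FirstSteps

lemma mul_add_one_le_of_mul_add_le {α β r N : ℕ} (hr : 1 ≤ r) (h : β * (1 + α * r) + r ≤ N) :
    α * β + 1 ≤ N := by
  nlinarith [Nat.mul_le_mul_left (α * β) hr]

theorem stmt13 (p : ℕ) (hp : p.Prime) (hl : 3 ≤ cfPeriod p) :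
    cfH p 3 = cfA p 1 * cfA p 2 + 1 ∧ cfA p 1 * cfA p 2 + 1 ≤ 2 * Nat.sqrt p := by
  refine ⟨cfH_three p, ?_⟩
  obtain ⟨n, t, rfl, ht₀, ht⟩ := exists_eq_sq_add_of_not_isSquare (Irreducible.not_isSquare hp)
  have hr : 1 ≤ 2 * n % t := by
    by_contra! h
    have := cfPeriod_le_two_of_dvd ht₀ ht (Nat.dvd_of_mod_eq_zero (by omega))
    omega
  rw [cfA_one ht, cfA_two ht₀ ht, Nat.sqrt_add_eq' n (by omega)]
  refine mul_add_one_le_of_mul_add_le hr ?_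
  have := Nat.div_mul_le_self (2 * n - 2 * n % t) (1 + 2 * n / t * (2 * n % t))
  have := Nat.mod_le (2 * n) t
  omega
end

section
/- Let k be a nonnegative integer such that p = 36k² + 52k + 19 is prime. Then the regular continued fraction of √p has period length 6. -/
lemma cfStep (p i m d a m' d' : ℕ) (h : cfState p i = (m, d))
    (ha : (Nat.sqrt p + m) / d = a) (hm : a * d - m = m') (hd : (p - m' ^ 2) / d = d') :
    cfState p (i + 1) = (m', d') := by
  simp only [cfState, h, ha, hm, hd]

lemma subdiv (p mm d d' : ℕ) (h : p = d' * d + mm ^ 2) (hd : 0 < d) :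
    (p - mm ^ 2) / d = d' := by
  rw [Nat.sub_eq_of_eq_add h, Nat.mul_div_cancel _ hd]

theorem stmt18 (k p : ℕ) (hpk : p = 36 * k ^ 2 + 52 * k + 19) (hp : p.Prime) :
    cfPeriod p = 6 := by
  have hs : Nat.sqrt p = 6 * k + 4 := by
    have h1 : 6 * k + 4 ≤ Nat.sqrt p := Nat.le_sqrt.mpr (by subst hpk; nlinarith)
    have h2 : Nat.sqrt p < 6 * k + 5 := Nat.sqrt_lt'.mpr (by subst hpk; nlinarith)
    omega
  have h0 : cfState p 0 = (0, 1) := rfl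
  have h1 : cfState p 1 = (6 * k + 4, 4 * k + 3) :=
    cfStep p 0 0 1 (6 * k + 4) (6 * k + 4) (4 * k + 3) h0 (by omega)
      (by omega) (subdiv _ _ _ _ (by rw [hpk]; ring) (by omega))
  have h2 : cfState p 2 = (2 * k + 2, 8 * k + 5) :=
    cfStep p 1 (6 * k + 4) (4 * k + 3) 2 (2 * k + 2) (8 * k + 5) h1
      (by rw [hs]; apply Nat.div_eq_of_lt_le <;> omega)
      (by omega) (subdiv _ _ _ _ (by rw [hpk]; ring) (by omega))
  have h3 : cfState p 3 = (6 * k + 3, 2) :=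
    cfStep p 2 (2 * k + 2) (8 * k + 5) 1 (6 * k + 3) 2 h2
      (by rw [hs]; apply Nat.div_eq_of_lt_le <;> omega)
      (by omega) (subdiv _ _ _ _ (by rw [hpk]; ring) (by omega))
  have h4 : cfState p 4 = (6 * k + 3, 8 * k + 5) :=
    cfStep p 3 (6 * k + 3) 2 (6 * k + 3) (6 * k + 3) (8 * k + 5) h3
      (by rw [hs]; apply Nat.div_eq_of_lt_le <;> omega)
      (by omega) (subdiv _ _ _ _ (by rw [hpk]; ring) (by omega))
  have h5 : cfState p 5 = (2 * k + 2, 4 * k + 3) :=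
    cfStep p 4 (6 * k + 3) (8 * k + 5) 1 (2 * k + 2) (4 * k + 3) h4
      (by rw [hs]; apply Nat.div_eq_of_lt_le <;> omega)
      (by omega) (subdiv _ _ _ _ (by rw [hpk]; ring) (by omega))
  have h6 : cfState p 6 = (6 * k + 4, 1) :=
    cfStep p 5 (2 * k + 2) (4 * k + 3) 2 (6 * k + 4) 1 h5
      (by rw [hs]; apply Nat.div_eq_of_lt_le <;> omega)
      (by omega) (subdiv _ _ _ _ (by rw [hpk]; ring) (by omega))
  have h7 : cfState p 7 = (6 * k + 4, 4 * k + 3) :=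
    cfStep p 6 (6 * k + 4) 1 (12 * k + 8) (6 * k + 4) (4 * k + 3) h6
      (by rw [hs]; omega)
      (by omega) (subdiv _ _ _ _ (by rw [hpk]; ring) (by omega))
  have hmem : 6 ∈ {l | 0 < l ∧ cfState p (l + 1) = cfState p 1} := by
    refine ⟨by norm_num, ?_⟩
    rw [h1]; exact h7
  unfold cfPeriod
  refine le_antisymm (Nat.sInf_le hmem) (le_csInf ⟨6, hmem⟩ ?_)
  rintro b ⟨hb0, hbs⟩
  by_contra hlt
  push_neg at hlt
  interval_cases b
  · rw [h1] at hbs; rw [h2] at hbs; simp only [Prod.mk.injEq] at hbs; omega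
  · rw [h1] at hbs; rw [h3] at hbs; simp only [Prod.mk.injEq] at hbs; omega
  · rw [h1] at hbs; rw [h4] at hbs; simp only [Prod.mk.injEq] at hbs; omega
  · rw [h1] at hbs; rw [h5] at hbs; simp only [Prod.mk.injEq] at hbs; omega
  · rw [h1] at hbs; rw [h6] at hbs; simp only [Prod.mk.injEq] at hbs; omega
end
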